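/- arXiv:2303.00267 — 5 statements merged into one kernel-verified Lean document; each statement's English description precedes it below -/
import Mathlib

section
/- The subsemimodule space D, endowed with the topology having {V(N) : N a subsemimodule of M} as a closed subbasis, is a T₀-space. -/
open Submodule

variable {R M : Type*} [CommSemiring R] [AddCommMonoid M] [Module R M]

/-- `V D N` = the set of members of `D` containing the subsemimodule `N`. -/
def V (D : Set (Submodule R M)) (N : Submodule R M) : Set (Submodule R M) :=
  {L ∈ D | N ≤ L}

/-- The topology on `D` generated by the sets `V D N` as a closed subbasis. -/
def subTop (D : Set (Submodule R M)) : TopologicalSpace ↥D :=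
  TopologicalSpace.generateFrom
    {U : Set ↥D | ∃ N : Submodule R M, U = {L : ↥D | ¬ N ≤ (L : Submodule R M)}}

theorem stmt11 (D : Set (Submodule R M)) (hD : (⊤ : Submodule R M) ∉ D) :
    @T0Space ↥D (subTop D) := by
  letI := subTop D
  refine ⟨fun x y h => ?_⟩
  by_contra hxy
  have hne : (x : Submodule R M) ≠ (y : Submodule R M) := fun e => hxy (Subtype.ext e)
  have key : ∀ N : Submodule R M,
      (¬ N ≤ (x : Submodule R M)) ↔ (¬ N ≤ (y : Submodule R M)) := by
    intro N
    have hopen : IsOpen {L : ↥D | ¬ N ≤ (L : Submodule R M)} :=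
      TopologicalSpace.isOpen_generateFrom_of_mem ⟨N, rfl⟩
    exact h.mem_open_iff hopen
  rcases (not_and_or.mp (fun hc => hne (le_antisymm hc.1 hc.2))) with hx | hy
  · exact (key (x : Submodule R M)).mpr hx le_rfl
  · exact (key (y : Submodule R M)).mp hy le_rfl
end

section
/- Every nonempty irreducible subbasis-closed set V(N) of a subsemimodule space D has a unique generic point if and only if for every subsemimodule N with V(N) nonempty and irreducible, N^ω ∈ V(N), where N^ω = ⋂{L : L ∈ V(N)}. -/
open Submodule

variable {R M : Type*} [CommSemiring R] [AddCommMonoid M] [Module R M]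

/-! The specialization order of `subTop D` is inclusion of subsemimodules, so a generic point of
the closed set `V(N)` is exactly a least element of `V D N`. Such an element exists iff
`sInf (V D N)` belongs to `V D N`, and it is unique because inclusion is antisymmetric. -/

namespace subTop

variable {D : Set (Submodule R M)}

theorem specializes_iff {x y : ↥D} :
    @Specializes ↥D (subTop D) x y ↔ (x : Submodule R M) ≤ y := by
  rw [@specializes_iff_pure, ← Filter.tendsto_id', subTop,
    TopologicalSpace.tendsto_nhds_generateFrom_iff]
  simp only [Set.mem_ofPred_eq, forall_exists_index, forall_eq_apply_imp_iff, Filter.mem_pure]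
  exact ⟨fun h => by_contra fun hxy => h x hxy le_rfl, fun h N hy hx => hy (hx.trans h)⟩

theorem isGenericPoint_iff_isLeast {N : Submodule R M} {x : ↥D} :
    @IsGenericPoint ↥D (subTop D) x {L : ↥D | N ≤ (L : Submodule R M)} ↔
      IsLeast (V D N) (x : Submodule R M) := by
  rw [@isGenericPoint_iff_specializes]
  simp only [specializes_iff, Set.mem_ofPred_eq]
  constructor
  · intro h
    exact ⟨⟨x.2, (h x).1 le_rfl⟩, fun L hL => (h ⟨L, hL.1⟩).2 hL.2⟩
  · rintro ⟨⟨-, hNx⟩, hx⟩ y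
    exact ⟨hNx.trans, fun hNy => hx ⟨y.2, hNy⟩⟩

end subTop

theorem existsUnique_isLeast_subtype_iff_sInf_mem {α : Type*} [CompleteLattice α] {D s : Set α}
    (hs : s ⊆ D) : (∃! x : ↥D, IsLeast s (x : α)) ↔ sInf s ∈ s := by
  constructor
  · rintro ⟨x, hx, -⟩
    exact hx.isGLB.sInf_eq ▸ hx.1
  · intro h
    refine ⟨⟨sInf s, hs h⟩, ⟨h, fun _ => sInf_le⟩, fun y hy => Subtype.ext ?_⟩
    exact hy.unique ⟨h, fun _ => sInf_le⟩

theorem stmt14_general (D : Set (Submodule R M)) :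
    (∀ N : Submodule R M,
        ({L : ↥D | N ≤ (L : Submodule R M)}).Nonempty →
        @IsIrreducible ↥D (subTop D) {L : ↥D | N ≤ (L : Submodule R M)} →
        ∃! x : ↥D, x ∈ {L : ↥D | N ≤ (L : Submodule R M)} ∧
          {L : ↥D | N ≤ (L : Submodule R M)} = @closure ↥D (subTop D) {x})
    ↔ (∀ N : Submodule R M,
        ({L : ↥D | N ≤ (L : Submodule R M)}).Nonempty →
        @IsIrreducible ↥D (subTop D) {L : ↥D | N ≤ (L : Submodule R M)} →
        sInf (V D N) ∈ V D N) := by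
  let := subTop D
  have generic_iff (N : Submodule R M) (x : ↥D) :
      (x ∈ {L : ↥D | N ≤ (L : Submodule R M)} ∧ {L : ↥D | N ≤ (L : Submodule R M)} = closure {x})
        ↔ IsLeast (V D N) (x : Submodule R M) := by
    rw [← subTop.isGenericPoint_iff_isLeast, IsGenericPoint, eq_comm]
    exact and_iff_right_of_imp fun h => h ▸ subset_closure rfl
  refine forall_congr' fun N => imp_congr_right fun _ => imp_congr_right fun _ => ?_
  simp only [generic_iff]
  exact existsUnique_isLeast_subtype_iff_sInf_mem fun _ hL => hL.1

theorem stmt14 (D : Set (Submodule R M)) (hD : (⊤ : Submodule R M) ∉ D) :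
    (∀ N : Submodule R M,
        ({L : ↥D | N ≤ (L : Submodule R M)}).Nonempty →
        @IsIrreducible ↥D (subTop D) {L : ↥D | N ≤ (L : Submodule R M)} →
        ∃! x : ↥D, x ∈ {L : ↥D | N ≤ (L : Submodule R M)} ∧
          {L : ↥D | N ≤ (L : Submodule R M)} = @closure ↥D (subTop D) {x})
    ↔ (∀ N : Submodule R M,
        ({L : ↥D | N ≤ (L : Submodule R M)}).Nonempty →
        @IsIrreducible ↥D (subTop D) {L : ↥D | N ≤ (L : Submodule R M)} →
        sInf (V D N) ∈ V D N) :=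
  stmt14_general D
end

section
/- If the zero subsemimodule {0} belongs to D, then the subsemimodule space D is connected. -/
open Submodule

variable {R M : Type*} [CommSemiring R] [AddCommMonoid M] [Module R M]

theorem stmt15 (D : Set (Submodule R M)) (hD : (⊤ : Submodule R M) ∉ D)
    (h0 : (⊥ : Submodule R M) ∈ D) :
    @ConnectedSpace ↥D (subTop D) := by
  letI := subTop D
  have key : ∀ U : Set ↥D, IsOpen U → U.Nonempty → (⟨⊥, h0⟩ : ↥D) ∈ U := by
    intro U hU
    induction hU with
    | basic U hU =>
      rintro ⟨x, hx⟩
      obtain ⟨N, rfl⟩ := hU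
      simp only [Set.mem_setOf_eq] at hx ⊢
      intro hle
      exact hx (hle.trans bot_le)
    | univ => exact fun _ => trivial
    | inter U W hU hW ihU ihW =>
      rintro ⟨x, hxU, hxW⟩
      exact ⟨ihU ⟨x, hxU⟩, ihW ⟨x, hxW⟩⟩
    | sUnion S hS ih =>
      rintro ⟨x, t, ht, hx⟩
      exact ⟨t, ht, ih t ht ⟨x, hx⟩⟩
  refine { toNonempty := ⟨⟨⊥, h0⟩⟩, isPreconnected_univ := ?_ }
  rintro u v hu hv _ ⟨x, _, hxu⟩ ⟨y, _, hyv⟩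
  exact ⟨⟨⊥, h0⟩, trivial, key u hu ⟨x, hxu⟩, key v hv ⟨y, hyv⟩⟩
end

section
/- Let φ: M → M' be an R-semimodule homomorphism such that φ⁻¹(N') ∈ D_M for every N' ∈ D_{M'} (contraction property). Then the map φ*: D_{M'} → D_M given by φ*(N') = φ⁻¹(N') is continuous, with (φ*)⁻¹(V(N)) = V(⟨φ(N)⟩) for every subsemimodule N of M. -/
open Submodule

variable {R M : Type*} [CommSemiring R] [AddCommMonoid M] [Module R M]

theorem stmt16 {M' : Type*} [AddCommMonoid M'] [Module R M'] (φ : M →ₗ[R] M')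
    (D : Set (Submodule R M)) (D' : Set (Submodule R M'))
    (hT : (⊤ : Submodule R M) ∉ D) (hT' : (⊤ : Submodule R M') ∉ D')
    (hc : ∀ N' ∈ D', Submodule.comap φ N' ∈ D) :
    @Continuous ↥D' ↥D (subTop D') (subTop D)
      (fun N' : ↥D' => (⟨Submodule.comap φ N'.1, hc N'.1 N'.2⟩ : ↥D)) ∧
    ∀ N : Submodule R M,
      (fun N' : ↥D' => (⟨Submodule.comap φ N'.1, hc N'.1 N'.2⟩ : ↥D)) ⁻¹'
          {L : ↥D | N ≤ (L : Submodule R M)}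
        = {L' : ↥D' | Submodule.map φ N ≤ (L' : Submodule R M')} := by
  have key : ∀ N : Submodule R M,
      (fun N' : ↥D' => (⟨Submodule.comap φ N'.1, hc N'.1 N'.2⟩ : ↥D)) ⁻¹'
          {L : ↥D | N ≤ (L : Submodule R M)}
        = {L' : ↥D' | Submodule.map φ N ≤ (L' : Submodule R M')} := by
    intro N
    ext L'
    simp [Set.mem_preimage, Submodule.map_le_iff_le_comap]
  refine ⟨?_, key⟩
  rw [subTop, subTop, continuous_generateFrom_iff]
  rintro U ⟨N, rfl⟩
  have : (fun N' : ↥D' => (⟨Submodule.comap φ N'.1, hc N'.1 N'.2⟩ : ↥D)) ⁻¹'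
      {L : ↥D | ¬ N ≤ (L : Submodule R M)}
      = {L' : ↥D' | ¬ Submodule.map φ N ≤ (L' : Submodule R M')} := by
    ext L'
    simp [Set.mem_preimage, Submodule.map_le_iff_le_comap]
  rw [this]
  exact TopologicalSpace.isOpen_generateFrom_of_mem ⟨Submodule.map φ N, rfl⟩
end

section
/- If M is a Noetherian R-semimodule (every ascending chain of subsemimodules stabilizes) and the space D of all subsemimodules of M (excluding M itself) with its closed-subbasis topology is discrete, then M is Artinian (every descending chain of subsemimodules stabilizes). -/
open Submodule

variable {R M : Type*} [CommSemiring R] [AddCommMonoid M] [Module R M]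

/-!
A descending chain that is not constantly `M` consists, from some stage on, of proper
subsemimodules, and their infimum `x` is proper too. Every subbasic neighbourhood
`{L | ¬ N ≤ L}` of `x` eventually contains the chain: if `N ≰ x = ⨅ f` then `N ≰ f m` for some
`m`, hence for all later ones. So the chain converges to `x` in `D`, and in a discrete space a
convergent sequence is eventually constant.
-/

open Filter

theorem Antitone.eventually_not_le_iInf {α ι : Type*} [CompleteLattice α] [Preorder ι]
    {f : ι → α} (hf : Antitone f) {a : α} (ha : ¬ a ≤ ⨅ i, f i) :
    ∀ᶠ i in atTop, ¬ a ≤ f i := by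
  obtain ⟨i, hi⟩ := not_forall.1 (mt le_iInf ha)
  exact (eventually_ge_atTop i).mono fun j hij h => hi (h.trans (hf hij))

theorem tendsto_subTop_iff {ι : Type*} {D : Set (Submodule R M)} {l : Filter ι}
    {g : ι → D} {x : D} :
    Tendsto g l (@nhds D (subTop D) x) ↔
      ∀ N : Submodule R M, ¬ N ≤ x → ∀ᶠ i in l, ¬ N ≤ g i := by
  rw [subTop, TopologicalSpace.tendsto_nhds_generateFrom_iff]
  constructor
  · exact fun h N hN => h _ ⟨N, rfl⟩ hN
  · rintro h _ ⟨N, rfl⟩ hN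
    exact h N hN

theorem tendsto_subTop_iInf_of_antitone {D : Set (Submodule R M)} {g : ℕ → D}
    (hg : Antitone fun m => (g m : Submodule R M)) {x : D}
    (hx : (x : Submodule R M) = ⨅ m, (g m : Submodule R M)) :
    Tendsto g atTop (@nhds D (subTop D) x) :=
  tendsto_subTop_iff.2 fun _ hN => hg.eventually_not_le_iInf (hx ▸ hN)

theorem stmt19_general
    (hdisc : @DiscreteTopology ↥{N : Submodule R M | N ≠ ⊤}
        (subTop {N : Submodule R M | N ≠ ⊤})) :
    ∀ f : ℕ → Submodule R M, Antitone f → ∃ n, ∀ m, n ≤ m → f m = f n := by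
  intro f hf
  by_cases htop : ∀ m, f m = ⊤
  · exact ⟨0, fun m _ => (htop m).trans (htop 0).symm⟩
  push Not at htop
  obtain ⟨n₀, hn₀⟩ := htop
  have hproper (m : ℕ) : f (m + n₀) ≠ ⊤ :=
    ne_top_of_le_ne_top hn₀ (hf (Nat.le_add_left n₀ m))
  let L : Submodule R M := ⨅ m, f (m + n₀)
  have hL : L ≠ ⊤ := ne_top_of_le_ne_top (hproper 0) (iInf_le _ 0)
  have hlim := tendsto_subTop_iInf_of_antitone (D := {N : Submodule R M | N ≠ ⊤})
    (g := fun m => ⟨f (m + n₀), hproper m⟩)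
    (x := ⟨L, hL⟩) (fun _ _ h => hf (by omega)) rfl
  rw [@nhds_discrete _ (subTop _) hdisc, tendsto_pure] at hlim
  have htail : Tendsto (fun m => f (m + n₀)) atTop (pure L) :=
    tendsto_pure.2 (hlim.mono fun _ h => congrArg Subtype.val h)
  rw [tendsto_add_atTop_iff_nat, tendsto_pure] at htail
  obtain ⟨n, hn⟩ := eventually_atTop.1 htail
  exact ⟨n, fun m hm => (hn m hm).trans (hn n le_rfl).symm⟩

theorem stmt19
    (hNoeth : ∀ f : ℕ → Submodule R M, Monotone f → ∃ n, ∀ m, n ≤ m → f m = f n)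
    (hdisc : @DiscreteTopology ↥{N : Submodule R M | N ≠ ⊤}
        (subTop {N : Submodule R M | N ≠ ⊤})) :
    ∀ f : ℕ → Submodule R M, Antitone f → ∃ n, ∀ m, n ≤ m → f m = f n :=
  stmt19_general hdisc
end
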